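/- arXiv:2604.19695 — 3 statements merged into one kernel-verified Lean document; each statement's English description precedes it below -/
import Mathlib

section
/- Let λ > 0, γ ∈ [0,1), K ≥ 1. Let V_λ and V₀ be bounded functions on a state space S satisfying V_λ(s) = F_λ(Q_λ,s) and V₀(s) = max(Q_{0,s}), where Q_{λ,s}(a) = r(s,a) + γ V_λ(z(s,a)) and Q_{0,s}(a) = r(s,a) + γ V₀(z(s,a)) for a deterministic transition z. Then sup_s |V_λ(s) − V₀(s)| ≤ λ log K / (1 − γ). -/
open Real Finset

/-!
Log-sum-exp lies between `max` and `max + λ log K`, and both are monotone and commute with adding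
constants. Hence if `|V_λ - V₀| ≤ B` everywhere, the two Bellman right-hand sides differ by at most
`λ log K + γ B`. Taking `B = sup |V_λ - V₀|`, finite since both are bounded, gives
`B ≤ λ log K + γ B`, i.e. `B ≤ λ log K / (1 - γ)`.
-/

section LogSumExp

variable {ι : Type*} [Fintype ι] {lam : ℝ}

lemma le_mul_log_sum_exp_div (hlam : 0 < lam) (x : ι → ℝ) (i : ι) :
    x i ≤ lam * log (∑ a, exp (x a / lam)) := by
  have hle : exp (x i / lam) ≤ ∑ a, exp (x a / lam) :=
    single_le_sum (f := fun a => exp (x a / lam)) (fun a _ => (exp_pos _).le) (mem_univ i)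
  rw [← div_le_iff₀' hlam, le_log_iff_exp_le (hle.trans_lt' (exp_pos _))]
  exact hle

lemma mul_log_sum_exp_div_le [Nonempty ι] (hlam : 0 < lam) {x : ι → ℝ} {M : ℝ}
    (hx : ∀ a, x a ≤ M) :
    lam * log (∑ a, exp (x a / lam)) ≤ M + lam * log (Fintype.card ι) := by
  have hcard : (0 : ℝ) < Fintype.card ι := by exact_mod_cast Fintype.card_pos
  have hsum : ∑ a, exp (x a / lam) ≤ Fintype.card ι * exp (M / lam) := by
    calc ∑ a, exp (x a / lam) ≤ ∑ _a : ι, exp (M / lam) :=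
          sum_le_sum fun a _ => exp_le_exp.2 (div_le_div_of_nonneg_right (hx a) hlam.le)
      _ = Fintype.card ι * exp (M / lam) := by rw [sum_const, card_univ, nsmul_eq_mul]
  have hlog : log (∑ a, exp (x a / lam)) ≤ M / lam + log (Fintype.card ι) := by
    calc log (∑ a, exp (x a / lam)) ≤ log (Fintype.card ι * exp (M / lam)) :=
          log_le_log (sum_pos (fun a _ => exp_pos _) univ_nonempty) hsum
      _ = M / lam + log (Fintype.card ι) := by
          rw [log_mul hcard.ne' (exp_pos _).ne', log_exp, add_comm]
  calc lam * log (∑ a, exp (x a / lam)) ≤ lam * (M / lam + log (Fintype.card ι)) :=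
        mul_le_mul_of_nonneg_left hlog hlam.le
    _ = M + lam * log (Fintype.card ι) := by field_simp

lemma abs_mul_log_sum_exp_div_sub_sup'_le (hlam : 0 < lam) (h : (univ : Finset ι).Nonempty)
    {x y : ι → ℝ} {c : ℝ} (hxy : ∀ a, |x a - y a| ≤ c) :
    |lam * log (∑ a, exp (x a / lam)) - univ.sup' h y| ≤ lam * log (Fintype.card ι) + c := by
  have : Nonempty ι := univ_nonempty_iff.1 h
  have hlogcard : 0 ≤ lam * log (Fintype.card ι) :=
    mul_nonneg hlam.le (log_nonneg (by exact_mod_cast Fintype.card_pos))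
  have hupper := mul_log_sum_exp_div_le hlam (x := x) (M := univ.sup' h y + c) fun a =>
    by linarith [(abs_sub_le_iff.1 (hxy a)).1, le_sup' y (mem_univ a)]
  have hlower : univ.sup' h y ≤ lam * log (∑ a, exp (x a / lam)) + c :=
    sup'_le h y fun a _ =>
      by linarith [(abs_sub_le_iff.1 (hxy a)).2, le_mul_log_sum_exp_div hlam x a]
  rw [abs_sub_le_iff]
  constructor <;> linarith

end LogSumExp

lemma le_div_one_sub_of_forall_le_add_mul {S : Type*} {f : S → ℝ} {a γ : ℝ} (hγ : γ < 1)
    (hf : BddAbove (Set.range f)) (h : ∀ B, (∀ t, f t ≤ B) → ∀ s, f s ≤ a + γ * B) (s : S) :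
    f s ≤ a / (1 - γ) := by
  have : Nonempty S := ⟨s⟩
  have hsup : ⨆ t, f t ≤ a + γ * ⨆ t, f t := ciSup_le (h _ (le_ciSup hf))
  have : ⨆ t, f t ≤ a / (1 - γ) := by
    rw [le_div_iff₀ (sub_pos.2 hγ)]
    linarith
  exact (le_ciSup hf s).trans this

theorem stmt_10 (S : Type*) (K : ℕ) (hK : 0 < K) (lam : ℝ) (hlam : 0 < lam)
    (γ : ℝ) (hγ : 0 ≤ γ ∧ γ < 1) (r : S → Fin K → ℝ) (z : S → Fin K → S)
    (Vl V0 : S → ℝ) (C : ℝ) (hbound : ∀ s, |Vl s| ≤ C ∧ |V0 s| ≤ C)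
    (hVl : ∀ s, Vl s = lam * Real.log (∑ a, Real.exp ((r s a + γ * Vl (z s a)) / lam)))
    (hV0 : ∀ s, V0 s =
      Finset.univ.sup' (Finset.univ_nonempty_iff.mpr (Fin.pos_iff_nonempty.mp hK))
        (fun a => r s a + γ * V0 (z s a))) :
    ∀ s, |Vl s - V0 s| ≤ lam * Real.log K / (1 - γ) := by
  obtain ⟨hγ0, hγ1⟩ := hγ
  have hbdd : BddAbove (Set.range fun s => |Vl s - V0 s|) :=
    ⟨2 * C, Set.forall_mem_range.2 fun s =>
      by linarith [abs_sub (Vl s) (V0 s), hbound s]⟩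
  have hcontract : ∀ B, (∀ t, |Vl t - V0 t| ≤ B) →
      ∀ s, |Vl s - V0 s| ≤ lam * log K + γ * B := by
    intro B hB s
    have hQ : ∀ a, |(r s a + γ * Vl (z s a)) - (r s a + γ * V0 (z s a))| ≤ γ * B := fun a => by
      rw [add_sub_add_left_eq_sub, ← mul_sub, abs_mul, abs_of_nonneg hγ0]
      exact mul_le_mul_of_nonneg_left (hB _) hγ0
    have := abs_mul_log_sum_exp_div_sub_sup'_le hlam
      (univ_nonempty_iff.mpr (Fin.pos_iff_nonempty.mp hK)) hQ
    rwa [Fintype.card_fin, ← hVl, ← hV0] at this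
  exact le_div_one_sub_of_forall_le_add_mul hγ1 hbdd hcontract
end

section
/- Let γ ∈ (0,1), α > 0, M ≥ 0, and define H(ε) = ⌈2 log_γ(ε(1−γ)/(1+M))⌉ and G(ε) = γ^{H(ε)(H(ε)−1)/2} · (2α/ε²)^{H(ε)}. Suppose n : ℝ₊ → ℝ satisfies n(ε) = 1 when ε ≥ (1+M)/(1−γ), and n(ε) ≤ (2α/ε²)·n(ε/√γ) otherwise, with n(ε) ≤ K·N(ε)·n(ε/√γ) + 1 ≤ (2α/ε²)·n(ε/√γ) whenever K·N(ε) + 1 ≤ 2α/ε². Then for all h ∈ ℕ and all ε with (1+M)√γ^h/(1−γ) ≤ ε ≤ (1+M)/(1−γ), we have n(ε) ≤ G(ε). -/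
open Real

/-!
Write `c = (1 + M) / (1 - γ)` and `x(ε) = 2α / ε²`. Dividing `ε` by `√γ` lowers the horizon
`H(ε)` by exactly one and multiplies `x` by `γ`, and the exponent identity
`k(k-1)/2 = (k-1)(k-2)/2 + (k-1)` turns this into `G(ε) = x(ε) · G(ε / √γ)`: the bound satisfies
the recursion of `n` with equality. On `[c, c / √γ)` the horizon is `0`, so `G = 1 = n` there,
and induction on the number of divisions by `√γ` needed to reach that window finishes the proof.
-/

/-- The horizon `H(ε)` of the paper. -/
noncomputable def horizon (γ M ε : ℝ) : ℤ :=
  ⌈2 * Real.logb γ (ε * (1 - γ) / (1 + M))⌉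

/-- The bound `G(ε)` of the paper. -/
noncomputable def sampleBound (γ α M ε : ℝ) : ℝ :=
  γ ^ ((horizon γ M ε * (horizon γ M ε - 1)) / 2) * (2 * α / ε ^ 2) ^ horizon γ M ε

theorem two_mul_logb_div_sqrt {γ : ℝ} (hγ₀ : 0 < γ) (hγ₁ : γ ≠ 1) {y : ℝ} (hy : y ≠ 0) :
    2 * logb γ (y / √γ) = 2 * logb γ y - 1 := by
  have hlog : log γ ≠ 0 := log_ne_zero_of_pos_of_ne_one hγ₀ hγ₁
  rw [logb_div hy (sqrt_pos.2 hγ₀).ne', logb, logb, log_sqrt hγ₀.le]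
  field_simp

theorem ceil_two_mul_logb_eq_zero {γ : ℝ} (hγ : 0 < γ ∧ γ < 1) {y : ℝ} (hy₁ : 1 ≤ y)
    (hy₂ : y < 1 / √γ) : ⌈2 * logb γ y⌉ = 0 := by
  have hsγ : 0 < √γ := sqrt_pos.2 hγ.1
  have hle : logb γ y ≤ 0 := (logb_nonpos_iff_of_base_lt_one hγ.1 hγ.2 (by linarith)).2 hy₁
  have hlt : logb γ (1 / √γ) < logb γ y :=
    logb_lt_logb_of_base_lt_one hγ.1 hγ.2 (by positivity) hy₂
  have hhalf : logb γ (1 / √γ) = -1 / 2 := by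
    have := two_mul_logb_div_sqrt hγ.1 hγ.2.ne one_ne_zero
    rw [logb_one] at this
    linarith
  rw [Int.ceil_eq_zero_iff, Set.mem_Ioc]
  constructor <;> linarith

theorem zpow_triangular_eq_mul {K : Type*} [Field K] {γ x : K} (hγ : γ ≠ 0) (hx : x ≠ 0) (k : ℤ) :
    γ ^ (k * (k - 1) / 2) * x ^ k =
      x * (γ ^ ((k - 1) * (k - 1 - 1) / 2) * (γ * x) ^ (k - 1)) := by
  have hexp : k * (k - 1) / 2 = (k - 1) * (k - 1 - 1) / 2 + (k - 1) := by
    rw [← Int.add_mul_ediv_right _ _ two_ne_zero]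
    ring_nf
  have hxk : x ^ k = x * x ^ (k - 1) := by rw [← zpow_one_add₀ hx, add_sub_cancel]
  rw [hexp, zpow_add₀ hγ, mul_zpow, hxk]
  ring

section

variable {γ α M : ℝ}

theorem horizon_div_sqrt (hγ : 0 < γ ∧ γ < 1) (hM : 0 ≤ M) {ε : ℝ} (hε : 0 < ε) :
    horizon γ M (ε / √γ) = horizon γ M ε - 1 := by
  have h1γ : 0 < 1 - γ := by linarith [hγ.2]
  have hy : ε * (1 - γ) / (1 + M) ≠ 0 := by positivity
  have hshift : ε / √γ * (1 - γ) / (1 + M) = ε * (1 - γ) / (1 + M) / √γ := by ring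
  rw [horizon, horizon, hshift, two_mul_logb_div_sqrt hγ.1 hγ.2.ne hy]
  exact_mod_cast Int.ceil_sub_intCast _ 1

theorem horizon_eq_zero (hγ : 0 < γ ∧ γ < 1) (hM : 0 ≤ M) {ε : ℝ}
    (h₁ : (1 + M) / (1 - γ) ≤ ε) (h₂ : ε < (1 + M) / (1 - γ) / √γ) :
    horizon γ M ε = 0 := by
  have h1γ : 0 < 1 - γ := by linarith [hγ.2]
  have h1M : 0 < 1 + M := by linarith
  have hsγ : 0 < √γ := sqrt_pos.2 hγ.1
  apply ceil_two_mul_logb_eq_zero hγ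
  · rwa [le_div_iff₀ h1M, one_mul, ← div_le_iff₀ h1γ]
  · rw [div_lt_iff₀ h1M, one_div_mul_eq_div, lt_div_iff₀ hsγ]
    rw [lt_div_iff₀ hsγ, lt_div_iff₀ h1γ] at h₂
    linarith

theorem sampleBound_eq_mul (hγ : 0 < γ ∧ γ < 1) (hα : 0 < α) (hM : 0 ≤ M) {ε : ℝ}
    (hε : 0 < ε) :
    sampleBound γ α M ε = 2 * α / ε ^ 2 * sampleBound γ α M (ε / √γ) := by
  have hx : 2 * α / (ε / √γ) ^ 2 = γ * (2 * α / ε ^ 2) := by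
    rw [div_pow, sq_sqrt hγ.1.le]
    field_simp
  rw [sampleBound, sampleBound, horizon_div_sqrt hγ hM hε, hx]
  exact zpow_triangular_eq_mul hγ.1.ne' (by positivity) _

theorem le_sampleBound_of_lt_div_sqrt (hγ : 0 < γ ∧ γ < 1) (hα : 0 < α) (hM : 0 ≤ M) (n : ℝ → ℝ)
    (h1 : ∀ ε : ℝ, (1 + M) / (1 - γ) ≤ ε → n ε = 1)
    (h2 : ∀ ε : ℝ, 0 < ε → ε < (1 + M) / (1 - γ) →
      n ε ≤ (2 * α / ε ^ 2) * n (ε / Real.sqrt γ)) (h : ℕ) {ε : ℝ}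
    (hlo : (1 + M) * √γ ^ h / (1 - γ) ≤ ε) (hhi : ε < (1 + M) / (1 - γ) / √γ) :
    n ε ≤ sampleBound γ α M ε := by
  have hsγ : 0 < √γ := sqrt_pos.2 hγ.1
  have hwindow : ∀ ε, (1 + M) / (1 - γ) ≤ ε → ε < (1 + M) / (1 - γ) / √γ →
      n ε ≤ sampleBound γ α M ε := by
    intro ε hge hhi
    rw [h1 ε hge, sampleBound, horizon_eq_zero hγ hM hge hhi]
    norm_num
  induction h generalizing ε with
  | zero => exact hwindow ε (by simpa using hlo) hhi
  | succ h ih =>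
    rcases le_or_gt ((1 + M) / (1 - γ)) ε with hge | hlt
    · exact hwindow ε hge hhi
    have hε : 0 < ε := lt_of_lt_of_le (by have := hγ.2; positivity) hlo
    have hlo' : (1 + M) * √γ ^ h / (1 - γ) ≤ ε / √γ := by
      rw [le_div_iff₀ hsγ]
      calc (1 + M) * √γ ^ h / (1 - γ) * √γ = (1 + M) * √γ ^ (h + 1) / (1 - γ) := by ring
        _ ≤ ε := hlo
    have hhi' : ε / √γ < (1 + M) / (1 - γ) / √γ := div_lt_div_of_pos_right hlt hsγ
    calc n ε ≤ 2 * α / ε ^ 2 * n (ε / √γ) := h2 ε hε hlt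
      _ ≤ 2 * α / ε ^ 2 * sampleBound γ α M (ε / √γ) := by gcongr; exact ih hlo' hhi'
      _ = sampleBound γ α M ε := (sampleBound_eq_mul hγ hα hM hε).symm

end

theorem stmt_11_general (γ α M : ℝ) (hγ : 0 < γ ∧ γ < 1) (hα : 0 < α) (hM : 0 ≤ M)
    (n : ℝ → ℝ)
    (h1 : ∀ ε : ℝ, (1 + M) / (1 - γ) ≤ ε → n ε = 1)
    (h2 : ∀ ε : ℝ, 0 < ε → ε < (1 + M) / (1 - γ) →
      n ε ≤ (2 * α / ε ^ 2) * n (ε / Real.sqrt γ)) :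
    ∀ (h : ℕ) (ε : ℝ),
      (1 + M) * Real.sqrt γ ^ h / (1 - γ) ≤ ε → ε ≤ (1 + M) / (1 - γ) →
      n ε ≤
        γ ^ ((⌈2 * Real.logb γ (ε * (1 - γ) / (1 + M))⌉ *
              (⌈2 * Real.logb γ (ε * (1 - γ) / (1 + M))⌉ - 1)) / 2) *
          (2 * α / ε ^ 2) ^ ⌈2 * Real.logb γ (ε * (1 - γ) / (1 + M))⌉ := by
  intro h ε hlo hhi
  have hc : 0 < (1 + M) / (1 - γ) := div_pos (by linarith) (by linarith [hγ.2])
  have hsγ : √γ < 1 := (sqrt_lt' one_pos).2 (by linarith [hγ.2])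
  have hc' : (1 + M) / (1 - γ) < (1 + M) / (1 - γ) / √γ :=
    (lt_div_iff₀ (sqrt_pos.2 hγ.1)).2 (mul_lt_of_lt_one_right hc hsγ)
  exact le_sampleBound_of_lt_div_sqrt hγ hα hM n h1 h2 h hlo (hhi.trans_lt hc')

theorem stmt_11 (γ α M K N : ℝ) (hγ : 0 < γ ∧ γ < 1) (hα : 0 < α) (hM : 0 ≤ M)
    (n : ℝ → ℝ)
    (h1 : ∀ ε : ℝ, (1 + M) / (1 - γ) ≤ ε → n ε = 1)
    (h2 : ∀ ε : ℝ, 0 < ε → ε < (1 + M) / (1 - γ) →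
      n ε ≤ (2 * α / ε ^ 2) * n (ε / Real.sqrt γ)) :
    ∀ (h : ℕ) (ε : ℝ),
      (1 + M) * Real.sqrt γ ^ h / (1 - γ) ≤ ε → ε ≤ (1 + M) / (1 - γ) →
      n ε ≤
        γ ^ ((⌈2 * Real.logb γ (ε * (1 - γ) / (1 + M))⌉ *
              (⌈2 * Real.logb γ (ε * (1 - γ) / (1 + M))⌉ - 1)) / 2) *
          (2 * α / ε ^ 2) ^ ⌈2 * Real.logb γ (ε * (1 - γ) / (1 + M))⌉ :=
  stmt_11_general γ α M hγ hα hM n h1 h2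
end

section
/- Fix λ > 0 and Q ∈ ℝ^K with all entries in a compact interval. The maximizer π* of π ↦ ∑_a (Q_a π_a + λ√(π_a)) over the probability simplex satisfies, for some Lagrange multiplier U > max_a Q_a, the first-order condition Q_a + λ/(2√(π*_a)) = U for all a, and consequently π*_a = (λ/2)²/(U − Q_a)² with ∑_a (λ/2)²/(U − Q_a)² = 1. -/
/-!
Moving mass `t` from coordinate `b` to coordinate `a` of the maximizer changes the objective by
`(Q a - Q b) t + λ (√(p a + t) - √(p a)) + λ (√(p b - t) - √(p b))`, which must be `≤ 0` for
`-p a ≤ t ≤ p b`. If `p a = 0` this gain is `λ √t - O(t) > 0` for small `t`, so the maximizer is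
interior; then `t = 0` is an interior local maximum, and the vanishing derivative says that the
marginal values `Q a + λ / (2 √(p a))` all agree. Their common value is `U`, and solving for `p a`
gives the closed form.
-/

open Real Finset Filter Topology

theorem Real.sqrt_sub_sqrt_sub_le {x t : ℝ} (hx : 0 < x) (ht : 0 ≤ t) :
    √x - √(x - t) ≤ t / √x := by
  rw [le_div_iff₀ (sqrt_pos.mpr hx), sub_mul, mul_self_sqrt hx.le]
  have hsq : x - t ≤ √(x - t) * √(x - t) := by
    rcases le_total 0 (x - t) with h | h
    · rw [mul_self_sqrt h]
    · nlinarith [sqrt_nonneg (x - t)]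
  nlinarith [sqrt_nonneg (x - t), sqrt_le_sqrt (by linarith : x - t ≤ x)]

variable {ι : Type*} [Fintype ι]

noncomputable def sqrtRegularizedValue (Q : ι → ℝ) (lam : ℝ) (p : ι → ℝ) : ℝ :=
  ∑ a, (Q a * p a + lam * √(p a))

variable [DecidableEq ι] {Q p : ι → ℝ} {lam : ℝ} {a b : ι}

lemma add_smul_single_sub_single_mem_stdSimplex (hp : p ∈ stdSimplex ℝ ι) (hab : a ≠ b)
    {t : ℝ} (hta : -p a ≤ t) (htb : t ≤ p b) :
    p + t • (Pi.single a 1 - Pi.single b 1) ∈ stdSimplex ℝ ι := by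
  refine ⟨fun x => ?_, ?_⟩
  · have := hp.1 x
    simp only [Pi.add_apply, Pi.smul_apply, Pi.sub_apply, Pi.single_apply, smul_eq_mul]
    split_ifs <;> grind
  · simp [Finset.sum_add_distrib, ← Finset.mul_sum, hp.2]

lemma sqrtRegularizedValue_add_smul_single_sub_single (hab : a ≠ b) (t : ℝ) :
    sqrtRegularizedValue Q lam (p + t • (Pi.single a 1 - Pi.single b 1)) =
      sqrtRegularizedValue Q lam p + ((Q a - Q b) * t + lam * (√(p a + t) - √(p a))
        + lam * (√(p b - t) - √(p b))) := by
  rw [sqrtRegularizedValue, sqrtRegularizedValue, ← sub_eq_iff_eq_add', ← Finset.sum_sub_distrib,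
    Finset.sum_eq_add a b hab (fun c _ hc => by simp [hc.1, hc.2]) (by simp) (by simp)]
  simp only [Pi.add_apply, Pi.smul_apply, Pi.sub_apply, Pi.single_eq_same, Pi.single_eq_of_ne hab,
    Pi.single_eq_of_ne hab.symm, smul_eq_mul, sub_zero, zero_sub, mul_one, mul_neg, ← sub_eq_add_neg]
  ring

lemma IsMaxOn.transfer_gain_nonpos_of_sqrtRegularized
    (hmax : IsMaxOn (sqrtRegularizedValue Q lam) (stdSimplex ℝ ι) p) (hp : p ∈ stdSimplex ℝ ι) (hab : a ≠ b) {t : ℝ} (hta : -p a ≤ t) (htb : t ≤ p b) :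
    (Q a - Q b) * t + lam * (√(p a + t) - √(p a)) + lam * (√(p b - t) - √(p b)) ≤ 0 := by
  have := hmax (add_smul_single_sub_single_mem_stdSimplex hp hab hta htb)
  rw [Set.mem_ofPred_eq, sqrtRegularizedValue_add_smul_single_sub_single hab] at this
  linarith

lemma IsMaxOn.pos_of_sqrtRegularized (hlam : 0 < lam)
    (hmax : IsMaxOn (sqrtRegularizedValue Q lam) (stdSimplex ℝ ι) p) (hp : p ∈ stdSimplex ℝ ι)
    (a : ι) : 0 < p a := by
  refine (hp.1 a).lt_of_ne' fun hpa => ?_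
  obtain ⟨b, -, hb⟩ := Finset.exists_ne_zero_of_sum_ne_zero (hp.2.symm ▸ one_ne_zero)
  have hpb : 0 < p b := (hp.1 b).lt_of_ne' hb
  have hab : a ≠ b := fun h => hb (h ▸ hpa)
  set C := Q b - Q a + lam / √(p b)
  have hC : Tendsto (fun t => C * √t) (𝓝[>] 0) (𝓝 0) :=
    ((continuous_const.mul continuous_sqrt).tendsto' 0 0 (by simp)).mono_left nhdsWithin_le_nhds
  obtain ⟨t, ⟨ht0, htb⟩, hCt⟩ : ∃ t, t ∈ Set.Ioc 0 (p b) ∧ C * √t < lam :=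
    (Filter.Eventually.and (Ioc_mem_nhdsGT hpb) (hC.eventually (gt_mem_nhds hlam))).exists
  have hgain := hmax.transfer_gain_nonpos_of_sqrtRegularized hp hab (by linarith) htb
  rw [hpa, zero_add, sqrt_zero, sub_zero] at hgain
  -- moving `t` into the empty coordinate gains `lam * √t`, which beats the linear loss `C * t`
  have hloss : lam * √t ≤ C * t := calc
    lam * √t ≤ (Q b - Q a) * t + lam * (√(p b) - √(p b - t)) := by linarith
    _ ≤ (Q b - Q a) * t + lam * (t / √(p b)) := by gcongr; exact sqrt_sub_sqrt_sub_le hpb ht0.le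
    _ = C * t := by ring
  have : C * t < lam * √t := calc
    C * t = C * √t * √t := by rw [mul_assoc, mul_self_sqrt ht0.le]
    _ < lam * √t := mul_lt_mul_of_pos_right hCt (sqrt_pos.mpr ht0)
  linarith

lemma IsMaxOn.marginal_eq_of_sqrtRegularized
    (hmax : IsMaxOn (sqrtRegularizedValue Q lam) (stdSimplex ℝ ι) p) (hp : p ∈ stdSimplex ℝ ι)
    (hpos : ∀ a, 0 < p a) (a b : ι) :
    Q a + lam / (2 * √(p a)) = Q b + lam / (2 * √(p b)) := by
  rcases eq_or_ne a b with rfl | hab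
  · rfl
  have hloc : IsLocalMax (fun t => (Q a - Q b) * t + lam * √(p a + t) + lam * √(p b - t)) 0 := by
    filter_upwards [Icc_mem_nhds (neg_lt_zero.mpr (hpos a)) (hpos b)] with t ht
    have := hmax.transfer_gain_nonpos_of_sqrtRegularized hp hab ht.1 ht.2
    simp only [mul_zero, add_zero, sub_zero, zero_add]
    linarith
  have hderiv : HasDerivAt (fun t => (Q a - Q b) * t + lam * √(p a + t) + lam * √(p b - t))
      ((Q a - Q b) * 1 + lam * (1 / (2 * √(p a + 0))) + lam * (-1 / (2 * √(p b - 0)))) 0 :=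
    (((hasDerivAt_id 0).const_mul _).add
      ((((hasDerivAt_id 0).const_add _).sqrt (by simpa using (hpos a).ne')).const_mul _)).add
      ((((hasDerivAt_id 0).const_sub _).sqrt (by simpa using (hpos b).ne')).const_mul _)
  have := hloc.hasDerivAt_eq_zero hderiv
  simp only [add_zero, sub_zero] at this
  field_simp at this ⊢
  linarith

lemma eq_sq_div_sq_of_add_div_sqrt_eq {x q lam U : ℝ} (hx : 0 < x) (hlam : 0 < lam)
    (h : q + lam / (2 * √x) = U) : x = (lam / 2) ^ 2 / (U - q) ^ 2 := by
  have hsx : 0 < √x := sqrt_pos.mpr hx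
  rw [← h, add_sub_cancel_left]
  field_simp
  exact (sq_sqrt hx.le).symm

theorem stmt_17 (K : ℕ) (hK : 0 < K) (lam : ℝ) (hlam : 0 < lam) (Q : Fin K → ℝ)
    (p : Fin K → ℝ) (hp0 : ∀ a, 0 ≤ p a) (hp1 : ∑ a, p a = 1)
    (hmax : ∀ p' : Fin K → ℝ, (∀ a, 0 ≤ p' a) → ∑ a, p' a = 1 →
      ∑ a, (Q a * p' a + lam * Real.sqrt (p' a)) ≤
        ∑ a, (Q a * p a + lam * Real.sqrt (p a))) :
    ∃ U : ℝ,
      Finset.univ.sup' (Finset.univ_nonempty_iff.mpr (Fin.pos_iff_nonempty.mp hK)) Q < U ∧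
      (∀ a, Q a + lam / (2 * Real.sqrt (p a)) = U) ∧
      (∀ a, p a = (lam / 2) ^ 2 / (U - Q a) ^ 2) ∧
      ∑ a, (lam / 2) ^ 2 / (U - Q a) ^ 2 = 1 := by
  have hp : p ∈ stdSimplex ℝ (Fin K) := ⟨hp0, hp1⟩
  have hmaxOn : IsMaxOn (sqrtRegularizedValue Q lam) (stdSimplex ℝ (Fin K)) p :=
    fun p' hp' => hmax p' hp'.1 hp'.2
  have hpos := hmaxOn.pos_of_sqrtRegularized hlam hp
  obtain ⟨a₀⟩ := Fin.pos_iff_nonempty.mp hK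
  set U := Q a₀ + lam / (2 * √(p a₀))
  have hU (a : Fin K) : Q a + lam / (2 * √(p a)) = U :=
    hmaxOn.marginal_eq_of_sqrtRegularized hp hpos a a₀
  have hp_eq (a : Fin K) : p a = (lam / 2) ^ 2 / (U - Q a) ^ 2 :=
    eq_sq_div_sq_of_add_div_sqrt_eq (hpos a) hlam (hU a)
  refine ⟨U, (Finset.sup'_lt_iff _).2 fun a _ => ?_, hU, hp_eq, ?_⟩
  · have : 0 < lam / (2 * √(p a)) := by have := sqrt_pos.mpr (hpos a); positivity
    linarith [hU a]
  · simpa only [← hp_eq] using hp1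
end
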